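/- arXiv:1808.04012 — 5 statements merged into one kernel-verified Lean document; each statement's English description precedes it below -/
import Mathlib

section
/- Let u = (u₁,…,u_d) and w = (w₁,…,w_d) be block vectors in ℂ^{dn} with blocks u_j, w_j ∈ ℂ^n. If ‖u_i‖₂ = ‖w_i‖₂ = 1 for some index i, then sin∠(u_i, w_i) ≤ min{‖u‖₂, ‖w‖₂} · sin∠(u, w). -/
open scoped BigOperators

/-- Euclidean norm of a finite complex vector. -/
noncomputable def cenorm {ι : Type*} [Fintype ι] (v : ι → ℂ) : ℝ :=
  Real.sqrt (∑ i, ‖v i‖ ^ 2)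

/-- Standard Hermitian inner product `w* u` (conjugate-linear in `w`). -/
noncomputable def cinner {ι : Type*} [Fintype ι] (w v : ι → ℂ) : ℂ :=
  ∑ i, (starRingEnd ℂ) (w i) * v i

/-- Sine of the acute angle between two vectors. -/
noncomputable def sinAngle {ι : Type*} [Fintype ι] (u w : ι → ℂ) : ℝ :=
  Real.sqrt (1 - ‖cinner w u‖ ^ 2 / (cenorm u ^ 2 * cenorm w ^ 2))

/-!
Write `t = |⟨w_i, u_i⟩|` and `c = |⟨w, u⟩|`, and split `⟨w, u⟩` into its `i`-th block and the
rest. Cauchy–Schwarz, first blockwise and then on the vector of block norms, gives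
`c ≤ t + √(‖u‖² - 1) √(‖w‖² - 1)`, and Cauchy–Schwarz in `ℝ²` turns this into
`c² ≤ ‖w‖² (‖u‖² - 1 + t²)`, i.e. `1 - t² ≤ ‖u‖² (1 - c² / (‖u‖² ‖w‖²))`; by symmetry the same
holds with `‖w‖` in place of the outer `‖u‖`.
-/

open Finset Function

section RealInequality

variable {t c U W : ℝ}

lemma sqrt_one_sub_sq_le_mul_sqrt (hU : 1 ≤ U) (hW : 1 ≤ W) (hc0 : 0 ≤ c)
    (hc : c ≤ t + √(U ^ 2 - 1) * √(W ^ 2 - 1)) :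
    √(1 - t ^ 2) ≤ U * √(1 - c ^ 2 / (U ^ 2 * W ^ 2)) := by
  have hA := Real.sq_sqrt (show 0 ≤ U ^ 2 - 1 by nlinarith)
  have hB := Real.sq_sqrt (show 0 ≤ W ^ 2 - 1 by nlinarith)
  have hcs : c ^ 2 ≤ W ^ 2 * (U ^ 2 - 1 + t ^ 2) := by
    nlinarith [sq_nonneg (√(U ^ 2 - 1) - t * √(W ^ 2 - 1)), mul_self_le_mul_self hc0 hc]
  calc √(1 - t ^ 2) ≤ √(U ^ 2 - c ^ 2 / W ^ 2) := by
        refine Real.sqrt_le_sqrt ?_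
        have : c ^ 2 / W ^ 2 ≤ U ^ 2 - 1 + t ^ 2 :=
          (div_le_iff₀ (by positivity)).2 (by linarith)
        linarith
    _ = √(U ^ 2 * (1 - c ^ 2 / (U ^ 2 * W ^ 2))) := by
        congr 1
        field_simp [show U ≠ 0 by positivity]
    _ = U * √(1 - c ^ 2 / (U ^ 2 * W ^ 2)) := by
        rw [Real.sqrt_mul (sq_nonneg U), Real.sqrt_sq (by positivity)]

lemma sqrt_one_sub_sq_le_min_mul_sqrt (hU : 1 ≤ U) (hW : 1 ≤ W) (hc0 : 0 ≤ c)
    (hc : c ≤ t + √(U ^ 2 - 1) * √(W ^ 2 - 1)) :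
    √(1 - t ^ 2) ≤ min U W * √(1 - c ^ 2 / (U ^ 2 * W ^ 2)) := by
  rcases le_total U W with h | h
  · rw [min_eq_left h]
    exact sqrt_one_sub_sq_le_mul_sqrt hU hW hc0 hc
  · rw [min_eq_right h, mul_comm (U ^ 2)]
    exact sqrt_one_sub_sq_le_mul_sqrt hW hU hc0 (by rwa [mul_comm] at hc)

end RealInequality

section BlockVectors

variable {ι κ : Type*} [Fintype ι] [Fintype κ]

lemma cenorm_sq (v : ι → ℂ) : cenorm v ^ 2 = ∑ i, ‖v i‖ ^ 2 :=
  Real.sq_sqrt (by positivity)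

lemma norm_cinner_le (w v : ι → ℂ) : ‖cinner w v‖ ≤ cenorm v * cenorm w := by
  have h := norm_inner_le_norm (𝕜 := ℂ) (WithLp.toLp 2 w : EuclideanSpace ℂ ι) (WithLp.toLp 2 v)
  simp only [EuclideanSpace.norm_eq, PiLp.inner_apply, RCLike.inner_apply] at h
  rw [cinner, cenorm, cenorm, mul_comm]
  simpa only [mul_comm] using h

lemma sinAngle_of_cenorm_eq_one {u w : ι → ℂ} (hu : cenorm u = 1) (hw : cenorm w = 1) :
    sinAngle u w = √(1 - ‖cinner w u‖ ^ 2) := by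
  rw [sinAngle, hu, hw]
  norm_num

lemma cenorm_uncurry_sq (v : κ → ι → ℂ) :
    cenorm (uncurry v) ^ 2 = ∑ j, cenorm (v j) ^ 2 := by
  simp only [cenorm_sq, Fintype.sum_prod_type, uncurry_apply_pair]

lemma cenorm_le_cenorm_uncurry (v : κ → ι → ℂ) (j : κ) : cenorm (v j) ≤ cenorm (uncurry v) := by
  have h : cenorm (v j) ^ 2 ≤ cenorm (uncurry v) ^ 2 := by
    rw [cenorm_uncurry_sq]
    exact single_le_sum (f := fun k => cenorm (v k) ^ 2) (fun _ _ => sq_nonneg _) (mem_univ j)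
  exact (pow_le_pow_iff_left₀ (Real.sqrt_nonneg _) (Real.sqrt_nonneg _) two_ne_zero).1 h

lemma cinner_uncurry (w v : κ → ι → ℂ) :
    cinner (uncurry w) (uncurry v) = ∑ j, cinner (w j) (v j) := by
  rw [cinner, Fintype.sum_prod_type]
  rfl

lemma norm_cinner_uncurry_le (w u : κ → ι → ℂ) (j : κ) :
    ‖cinner (uncurry w) (uncurry u)‖ ≤ ‖cinner (w j) (u j)‖ +
      √(cenorm (uncurry u) ^ 2 - cenorm (u j) ^ 2) *
        √(cenorm (uncurry w) ^ 2 - cenorm (w j) ^ 2) := by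
  classical
  have hrest (v : κ → ι → ℂ) :
      ∑ k ∈ univ.erase j, cenorm (v k) ^ 2 = cenorm (uncurry v) ^ 2 - cenorm (v j) ^ 2 := by
    rw [sum_erase_eq_sub (mem_univ j), cenorm_uncurry_sq]
  calc ‖cinner (uncurry w) (uncurry u)‖
        = ‖cinner (w j) (u j) + ∑ k ∈ univ.erase j, cinner (w k) (u k)‖ := by
          rw [cinner_uncurry, ← add_sum_erase _ _ (mem_univ j)]
    _ ≤ ‖cinner (w j) (u j)‖ + ∑ k ∈ univ.erase j, cenorm (u k) * cenorm (w k) := by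
          grw [norm_add_le, norm_sum_le]
          gcongr with k
          exact norm_cinner_le (w k) (u k)
    _ ≤ _ := by
          rw [← hrest, ← hrest]
          gcongr
          exact Real.sum_mul_le_sqrt_mul_sqrt _ _ _

end BlockVectors

/-- For block vectors `u, w ∈ ℂ^{dn}` with `‖u_i‖ = ‖w_i‖ = 1`,
`sin∠(u_i, w_i) ≤ min{‖u‖, ‖w‖} · sin∠(u, w)`. -/
theorem stmt2 {d n : ℕ} (u w : Fin d → Fin n → ℂ) (i : Fin d)
    (hui : cenorm (u i) = 1) (hwi : cenorm (w i) = 1) :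
    sinAngle (u i) (w i) ≤
      min (cenorm fun p : Fin d × Fin n => u p.1 p.2)
          (cenorm fun p : Fin d × Fin n => w p.1 p.2) *
        sinAngle (fun p : Fin d × Fin n => u p.1 p.2)
          (fun p : Fin d × Fin n => w p.1 p.2) := by
  have hU := hui ▸ cenorm_le_cenorm_uncurry u i
  have hW := hwi ▸ cenorm_le_cenorm_uncurry w i
  have hc := norm_cinner_uncurry_le w u i
  rw [hui, hwi, one_pow] at hc
  rw [sinAngle_of_cenorm_eq_one hui hwi]
  exact sqrt_one_sub_sq_le_min_mul_sqrt hU hW (norm_nonneg _) hc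
end

section
/- Let L(λ₀)H(λ₀) = g(λ₀) ⊗ P(λ₀) with g(λ₀) ≠ 0 and H(λ₀) of full column rank. If x ∈ ℂ^n is nonzero and P(λ₀)x = 0, then v := H(λ₀)x is a nonzero vector with L(λ₀)v = 0; i.e., eigenvectors of P at λ₀ map to eigenvectors of L at λ₀ under H(λ₀). -/
open scoped BigOperators

/-- Kronecker product `g ⊗ P ∈ ℂ^{dn×n}` of a vector `g ∈ ℂ^d`
and a matrix `P ∈ ℂ^{n×n}`. -/
def kron {d n : ℕ} (g : Fin d → ℂ) (P : Matrix (Fin n) (Fin n) ℂ) :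
    Matrix (Fin d × Fin n) (Fin n) ℂ :=
  Matrix.of fun p j => g p.1 * P p.2 j

/-- If `L H = g ⊗ P` with `g ≠ 0` and `H` of full column rank, then every
eigenvector `x` of `P` at `λ₀` maps to an eigenvector `v = H x` of `L` at `λ₀`:
`v` is nonzero and `L v = 0`. -/
theorem stmt6 {d n : ℕ} (L : Matrix (Fin d × Fin n) (Fin d × Fin n) ℂ)
    (H : Matrix (Fin d × Fin n) (Fin n) ℂ) (g : Fin d → ℂ)
    (P : Matrix (Fin n) (Fin n) ℂ)
    (hfact : L * H = kron g P) (hg : g ≠ 0)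
    (hH : Function.Injective H.mulVec)
    (x : Fin n → ℂ) (hx : x ≠ 0) (hPx : P.mulVec x = 0) :
    H.mulVec x ≠ 0 ∧ L.mulVec (H.mulVec x) = 0 := by
  constructor
  · intro h
    apply hx
    apply hH
    rw [h, Matrix.mulVec_zero]
  · have : L.mulVec (H.mulVec x) = (L * H).mulVec x := by
      rw [Matrix.mulVec_mulVec]
    rw [this, hfact]
    funext p
    have hp : (kron g P).mulVec x p = g p.1 * P.mulVec x p.2 := by
      simp [kron, Matrix.mulVec, dotProduct, Finset.mul_sum, mul_assoc]
    rw [hp, hPx]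
    simp
end

section
/- Let P(λ) = Σ_{i=0}^d λ^i A_i of degree d = ε + η + 1 and let L(λ) = [[M(λ), L_η(λ)ᵀ ⊗ I_n],[L_ε(λ) ⊗ I_n, 0]] be a block Kronecker pencil with (Λ_η(λ)ᵀ ⊗ I_n) M(λ) (Λ_ε(λ) ⊗ I_n) = P(λ). Then for every λ ∈ ℂ, L(λ) · [Λ_ε(λ) ⊗ I_n ; R_η(λ) M(λ)(Λ_ε(λ) ⊗ I_n)] = e_{η+1} ⊗ P(λ), where R_η(λ) is the ηn×(η+1)n lower-triangular block-Toeplitz matrix with (i,j) block λ^{i-j} I_n for 1 ≤ j ≤ i ≤ η and 0 otherwise. -/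
open scoped BigOperators

/-- The `k × (k+1)` pencil `L_k(λ)` with `-1` on the diagonal and `λ` on the
superdiagonal. -/
def Lmat (k : ℕ) (μ : ℂ) : Matrix (Fin k) (Fin (k + 1)) ℂ :=
  Matrix.of fun i j =>
    if (j : ℕ) = (i : ℕ) then -1 else if (j : ℕ) = (i : ℕ) + 1 then μ else 0

/-- `L_k(λ) ⊗ I_n`. -/
def LmatI (k n : ℕ) (μ : ℂ) : Matrix (Fin k × Fin n) (Fin (k + 1) × Fin n) ℂ :=
  Matrix.of fun p q => Lmat k μ p.1 q.1 * (if p.2 = q.2 then 1 else 0)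

/-- `L_k(λ)ᵀ ⊗ I_n`. -/
def LmatTI (k n : ℕ) (μ : ℂ) : Matrix (Fin (k + 1) × Fin n) (Fin k × Fin n) ℂ :=
  Matrix.of fun p q => Lmat k μ q.1 p.1 * (if p.2 = q.2 then 1 else 0)

/-- `Λ_k(λ) ⊗ I_n` where `Λ_k(λ) = (λ^k, …, λ, 1)ᵀ`. -/
def LamI (k n : ℕ) (μ : ℂ) : Matrix (Fin (k + 1) × Fin n) (Fin n) ℂ :=
  Matrix.of fun p j => μ ^ (k - (p.1 : ℕ)) * (if p.2 = j then 1 else 0)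

/-- `Λ_k(λ)ᵀ ⊗ I_n`. -/
def LamTI (k n : ℕ) (μ : ℂ) : Matrix (Fin n) (Fin (k + 1) × Fin n) ℂ :=
  Matrix.of fun i q => μ ^ (k - (q.1 : ℕ)) * (if i = q.2 then 1 else 0)

/-- The lower-triangular block-Toeplitz matrix `R_k(λ)` with `(i,j)` block
`λ^{i-j} I_n` for `j ≤ i` and `0` otherwise. -/
def Rmat (k n : ℕ) (μ : ℂ) : Matrix (Fin k × Fin n) (Fin (k + 1) × Fin n) ℂ :=
  Matrix.of fun p q =>
    (if (q.1 : ℕ) ≤ (p.1 : ℕ) then μ ^ ((p.1 : ℕ) - (q.1 : ℕ)) else 0) *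
      (if p.2 = q.2 then 1 else 0)

lemma kron_mul {a b c n : ℕ} (f : Fin a → Fin b → ℂ) (g : Fin b → Fin c → ℂ) :
    (Matrix.of fun (p : Fin a × Fin n) (q : Fin b × Fin n) =>
        f p.1 q.1 * (if p.2 = q.2 then 1 else 0)) *
      (Matrix.of fun (p : Fin b × Fin n) (q : Fin c × Fin n) =>
        g p.1 q.1 * (if p.2 = q.2 then 1 else 0)) =
    Matrix.of fun p q => (∑ k, f p.1 k * g k q.1) * (if p.2 = q.2 then 1 else 0) := by
  ext ⟨i, s⟩ ⟨j, t⟩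
  simp only [Matrix.mul_apply, Matrix.of_apply, Fintype.sum_prod_type, Finset.sum_mul,
    mul_ite, mul_one, mul_zero, ite_mul, zero_mul]
  rw [Finset.sum_comm]
  by_cases hst : s = t
  · subst hst; simp [Finset.sum_ite_eq]
  · simp [Finset.sum_ite_eq, hst]

lemma kron_mul_lam {a b n : ℕ} (f : Fin a → Fin b → ℂ) (g : Fin b → ℂ) :
    (Matrix.of fun (p : Fin a × Fin n) (q : Fin b × Fin n) =>
        f p.1 q.1 * (if p.2 = q.2 then 1 else 0)) *
      (Matrix.of fun (q : Fin b × Fin n) (j : Fin n) =>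
        g q.1 * (if q.2 = j then 1 else 0)) =
    Matrix.of fun p j => (∑ k, f p.1 k * g k) * (if p.2 = j then 1 else 0) := by
  ext ⟨i, s⟩ j
  simp only [Matrix.mul_apply, Matrix.of_apply, Fintype.sum_prod_type, Finset.sum_mul,
    mul_ite, mul_one, mul_zero, ite_mul, zero_mul]
  rw [Finset.sum_comm]
  by_cases hst : s = j
  · subst hst; simp [Finset.sum_ite_eq]
  · simp [Finset.sum_ite_eq, hst]

-- scalar identity for L_ηᵀ R_η
lemma LTR_scalar (eta : ℕ) (μ : ℂ) (p q : Fin (eta + 1)) :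
    ∑ k : Fin eta, Lmat eta μ k p *
        (if (q : ℕ) ≤ (k : ℕ) then μ ^ ((k : ℕ) - (q : ℕ)) else 0) =
    (if (p : ℕ) = eta then μ ^ (eta - (q : ℕ)) else 0) -
      (if (p : ℕ) = (q : ℕ) then 1 else 0) := by
  have hp : (p : ℕ) ≤ eta := Nat.lt_succ_iff.mp p.isLt
  have hq : (q : ℕ) ≤ eta := Nat.lt_succ_iff.mp q.isLt
  have step : ∀ k : Fin eta,
      Lmat eta μ k p * (if (q : ℕ) ≤ (k : ℕ) then μ ^ ((k : ℕ) - (q : ℕ)) else 0) =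
      (if (k : ℕ) = (p : ℕ) then
          -(if (q : ℕ) ≤ (k : ℕ) then μ ^ ((k : ℕ) - (q : ℕ)) else 0) else 0) +
      (if (k : ℕ) = (p : ℕ) - 1 then
          (if 1 ≤ (p : ℕ) then
            μ * (if (q : ℕ) ≤ (k : ℕ) then μ ^ ((k : ℕ) - (q : ℕ)) else 0) else 0) else 0) := by
    intro k
    simp only [Lmat, Matrix.of_apply]
    split_ifs <;> (try ring) <;> omega
  rw [Finset.sum_congr rfl fun k _ => step k, Finset.sum_add_distrib]
  rw [Fin.sum_univ_eq_sum_range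
    (fun m => (if m = (p : ℕ) then
        -(if (q : ℕ) ≤ m then μ ^ (m - (q : ℕ)) else 0) else 0)),
    Fin.sum_univ_eq_sum_range
    (fun m => (if m = (p : ℕ) - 1 then
        (if 1 ≤ (p : ℕ) then
          μ * (if (q : ℕ) ≤ m then μ ^ (m - (q : ℕ)) else 0) else 0) else 0))]
  rw [Finset.sum_ite_eq' (Finset.range eta), Finset.sum_ite_eq' (Finset.range eta)]
  simp only [Finset.mem_range]
  have key : ∀ a : ℕ, (q : ℕ) < a → μ ^ (a - (q : ℕ)) = μ * μ ^ (a - 1 - (q : ℕ)) := by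
    intro a h
    rw [show a - (q : ℕ) = (a - 1 - (q : ℕ)) + 1 by omega, pow_succ]
    ring
  split_ifs <;> try (exfalso; omega)
  all_goals try ring
  all_goals try (rw [key eta (by omega)]; ring)
  all_goals try (rw [key (p : ℕ) (by omega)]; ring)
  all_goals try (rw [show eta - (q : ℕ) = 0 by omega]; ring)
  all_goals try (rw [show (p : ℕ) - (q : ℕ) = 0 by omega]; ring)
  all_goals try (rw [show (p : ℕ) - 1 - (q : ℕ) = eta - 1 - (q : ℕ) by omega])


lemma LLam_scalar (eps : ℕ) (μ : ℂ) (i : Fin eps) :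
    ∑ k : Fin (eps + 1), Lmat eps μ i k * μ ^ (eps - (k : ℕ)) = 0 := by
  have hi : (i : ℕ) < eps := i.isLt
  have step : ∀ k : Fin (eps + 1),
      Lmat eps μ i k * μ ^ (eps - (k : ℕ)) =
      (if (k : ℕ) = (i : ℕ) then -μ ^ (eps - (k : ℕ)) else 0) +
      (if (k : ℕ) = (i : ℕ) + 1 then μ * μ ^ (eps - (k : ℕ)) else 0) := by
    intro k
    simp only [Lmat, Matrix.of_apply]
    split_ifs <;> (try ring) <;> omega
  rw [Finset.sum_congr rfl fun k _ => step k, Finset.sum_add_distrib]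
  rw [Fin.sum_univ_eq_sum_range (fun m => (if m = (i : ℕ) then -μ ^ (eps - m) else 0)),
    Fin.sum_univ_eq_sum_range (fun m => (if m = (i : ℕ) + 1 then μ * μ ^ (eps - m) else 0))]
  rw [Finset.sum_ite_eq' (Finset.range (eps + 1)), Finset.sum_ite_eq' (Finset.range (eps + 1))]
  rw [if_pos (Finset.mem_range.mpr (by omega)), if_pos (Finset.mem_range.mpr (by omega))]
  rw [show eps - (i : ℕ) = (eps - ((i : ℕ) + 1)) + 1 by omega, pow_succ]
  ring

/-- `LmatI * LamI = 0`. -/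
lemma LmatI_mul_LamI (eps n : ℕ) (μ : ℂ) : LmatI eps n μ * LamI eps n μ = 0 := by
  have := kron_mul_lam (n := n) (fun (i : Fin eps) (k : Fin (eps + 1)) => Lmat eps μ i k)
    (fun k : Fin (eps + 1) => μ ^ (eps - (k : ℕ)))
  rw [show LmatI eps n μ * LamI eps n μ =
      (Matrix.of fun (p : Fin eps × Fin n) (q : Fin (eps + 1) × Fin n) =>
        Lmat eps μ p.1 q.1 * (if p.2 = q.2 then 1 else 0)) *
      (Matrix.of fun (q : Fin (eps + 1) × Fin n) (j : Fin n) =>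
        μ ^ (eps - (q.1 : ℕ)) * (if q.2 = j then 1 else 0)) from rfl, this]
  ext p j
  simp [LLam_scalar]

/-- The matrix `E = (e_{η+1} Λ_ηᵀ) ⊗ I_n`. -/
def Emat (eta n : ℕ) (μ : ℂ) : Matrix (Fin (eta + 1) × Fin n) (Fin (eta + 1) × Fin n) ℂ :=
  Matrix.of fun p q =>
    (if (p.1 : ℕ) = eta then μ ^ (eta - (q.1 : ℕ)) else 0) * (if p.2 = q.2 then 1 else 0)

lemma LmatTI_mul_Rmat (eta n : ℕ) (μ : ℂ) :
    LmatTI eta n μ * Rmat eta n μ = Emat eta n μ - 1 := by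
  have := kron_mul (n := n) (fun (p : Fin (eta + 1)) (k : Fin eta) => Lmat eta μ k p)
    (fun (k : Fin eta) (q : Fin (eta + 1)) =>
      if (q : ℕ) ≤ (k : ℕ) then μ ^ ((k : ℕ) - (q : ℕ)) else 0)
  rw [show LmatTI eta n μ * Rmat eta n μ =
      (Matrix.of fun (p : Fin (eta + 1) × Fin n) (q : Fin eta × Fin n) =>
        Lmat eta μ q.1 p.1 * (if p.2 = q.2 then 1 else 0)) *
      (Matrix.of fun (p : Fin eta × Fin n) (q : Fin (eta + 1) × Fin n) =>
        (if (q.1 : ℕ) ≤ (p.1 : ℕ) then μ ^ ((p.1 : ℕ) - (q.1 : ℕ)) else 0) *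
          (if p.2 = q.2 then 1 else 0)) from rfl, this]
  ext ⟨i, s⟩ ⟨j, t⟩
  simp only [Matrix.of_apply, LTR_scalar, Emat, Matrix.sub_apply, Matrix.one_apply,
    Prod.mk.injEq]
  by_cases hij : i = j <;> by_cases hst : s = t <;>
    simp [hij, hst, Fin.val_eq_val, sub_mul] <;> ring

lemma Emat_mul (eta n : ℕ) (μ : ℂ) (X : Matrix (Fin (eta + 1) × Fin n) (Fin n) ℂ) :
    Emat eta n μ * X =
    Matrix.of fun p j => if (p.1 : ℕ) = eta then (LamTI eta n μ * X) p.2 j else 0 := by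
  ext ⟨i, s⟩ j
  by_cases h : (i : ℕ) = eta <;>
    simp [Matrix.mul_apply, Emat, LamTI, h, mul_assoc]

/-- Right-sided factorization \eqref{eq:right-sided1} for a block Kronecker
linearization `L(λ) = [[M(λ), L_ηᵀ⊗I],[L_ε⊗I, 0]]` of
`P(λ) = Σ_{i=0}^{ε+η+1} λ^i A_i`:
`L(λ)·[Λ_ε(λ)⊗I ; R_η(λ)M(λ)(Λ_ε(λ)⊗I)] = e_{η+1} ⊗ P(λ)`. -/
theorem stmt13 {n eps eta : ℕ} (A : ℕ → Matrix (Fin n) (Fin n) ℂ)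
    (M0 M1 : Matrix (Fin (eta + 1) × Fin n) (Fin (eps + 1) × Fin n) ℂ)
    (hM : ∀ μ : ℂ, LamTI eta n μ * (M0 + μ • M1) * LamI eps n μ =
      ∑ i ∈ Finset.range (eps + eta + 2), μ ^ i • A i)
    (μ : ℂ) :
    Matrix.fromBlocks (M0 + μ • M1) (LmatTI eta n μ) (LmatI eps n μ) 0 *
      (Matrix.of fun p (j : Fin n) =>
        Sum.elim (fun q : Fin (eps + 1) × Fin n => LamI eps n μ q j)
          (fun q : Fin eta × Fin n =>
            (Rmat eta n μ * (M0 + μ • M1) * LamI eps n μ) q j) p) =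
    Matrix.of fun p (j : Fin n) =>
      Sum.elim
        (fun q : Fin (eta + 1) × Fin n =>
          if (q.1 : ℕ) = eta then
            (∑ i ∈ Finset.range (eps + eta + 2), μ ^ i • A i) q.2 j
          else 0)
        (fun _ : Fin eps × Fin n => 0) p := by
  set M : Matrix (Fin (eta + 1) × Fin n) (Fin (eps + 1) × Fin n) ℂ := M0 + μ • M1 with hMdef
  have hkey : LmatTI eta n μ * (Rmat eta n μ * M * LamI eps n μ) =
      Emat eta n μ * (M * LamI eps n μ) - M * LamI eps n μ := by
    rw [Matrix.mul_assoc (Rmat eta n μ), ← Matrix.mul_assoc (LmatTI eta n μ), LmatTI_mul_Rmat,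
      Matrix.sub_mul, Matrix.one_mul]
  ext p j
  cases p with
  | inl p =>
    rw [Matrix.mul_apply, Fintype.sum_sum_type]
    simp only [Matrix.fromBlocks_apply₁₁, Matrix.fromBlocks_apply₁₂, Matrix.of_apply,
      Sum.elim_inl, Sum.elim_inr]
    rw [← Matrix.mul_apply (M := M) (N := LamI eps n μ),
      ← Matrix.mul_apply (M := LmatTI eta n μ) (N := Rmat eta n μ * M * LamI eps n μ),
      show LmatTI eta n μ * (Rmat eta n μ * M * LamI eps n μ) =
        Emat eta n μ * (M * LamI eps n μ) - M * LamI eps n μ from hkey,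
      Matrix.sub_apply]
    rw [Emat_mul]
    simp only [Matrix.of_apply]
    rw [← Matrix.mul_assoc, hM μ]
    ring
  | inr p =>
    rw [Matrix.mul_apply, Fintype.sum_sum_type]
    simp only [Matrix.fromBlocks_apply₂₁, Matrix.fromBlocks_apply₂₂, Matrix.of_apply,
      Sum.elim_inl, Sum.elim_inr, Matrix.zero_apply, zero_mul, Finset.sum_const_zero,
      add_zero]
    rw [← Matrix.mul_apply (M := LmatI eps n μ) (N := LamI eps n μ), LmatI_mul_LamI]
    simp
end

section
/- Let P(λ) be an n×n matrix polynomial of degree d and L(λ) = A − λB a dn×dn linearization admitting a right-sided factorization L(λ)H(λ) = g(λ) ⊗ P(λ) valid at λ̃₀, where the block H_i(λ) = I_n for some fixed i. Let (λ₀, x) be an exact unit eigenpair of P with v := H(λ₀)x, and (λ̃₀, x̃) an approximate unit eigenpair with λ̃₀ not an eigenvalue of L. With A₁, B₁ the trailing blocks of a generalized Schur form of (A,B) deflating the eigenpair (λ₀, v), one has sin∠(x, x̃) ≤ ‖g(λ̃₀)‖₂ · ‖P(λ̃₀)x̃‖₂ / σ_min(A₁ − λ̃₀B₁). -/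
open scoped BigOperators
open Matrix

/-- Spectral (operator 2-) norm of a square complex matrix. -/
noncomputable def opNorm {k : Type*} [Fintype k] [DecidableEq k]
    (M : Matrix k k ℂ) : ℝ :=
  ‖Matrix.toEuclideanCLM (𝕜 := ℂ) M‖

/-- Smallest singular value of an invertible matrix: `σ_min(M) = ‖M⁻¹‖₂⁻¹`. -/
noncomputable def sigmaMin {k : Type*} [Fintype k] [DecidableEq k]
    (M : Matrix k k ℂ) : ℝ :=
  (opNorm M⁻¹)⁻¹

/-!
Write `v = H(λ₀)x`, `ṽ = H(λ̃₀)x̃` and `u = Z*ṽ`. Since the `i`-th block of `H` is the identity,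
`x` and `x̃` are the `i`-th blocks of `v` and `ṽ`, so `sin∠(x, x̃) ≤ ‖x̃ - c x‖ ≤ ‖ṽ - c v‖` for
every scalar `c`. As `v` spans the first column of the unitary `Z`, the best choice of `c` leaves
exactly the trailing part `y` of `u`. The first column of `Q*L(λ̃₀)Z` vanishes below its diagonal
entry, so `(A₁ - λ̃₀B₁) y` is the trailing part of `Q*L(λ̃₀)ṽ = Q*(g(λ̃₀) ⊗ P(λ̃₀)x̃)`, whose norm
is at most `‖g(λ̃₀)‖ ‖P(λ̃₀)x̃‖`; inverting `A₁ - λ̃₀B₁` gives the bound.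
-/
section EuclideanNorm

variable {ι : Type*} [Fintype ι]

lemma cenorm_eq_norm_toLp (v : ι → ℂ) : cenorm v = ‖WithLp.toLp 2 v‖ := by
  rw [EuclideanSpace.norm_eq]
  rfl

lemma cinner_eq_inner_toLp (w v : ι → ℂ) :
    cinner w v = inner ℂ (WithLp.toLp 2 w : EuclideanSpace ℂ ι) (WithLp.toLp 2 v) := by
  simp [cinner, PiLp.inner_apply, mul_comm]

lemma cenorm_nonneg (v : ι → ℂ) : 0 ≤ cenorm v :=
  Real.sqrt_nonneg _

lemma cenorm_comp_le {κ : Type*} [Fintype κ] {e : κ → ι} (he : Function.Injective e)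
    (v : ι → ℂ) : cenorm (v ∘ e) ≤ cenorm v := by
  classical
  refine Real.sqrt_le_sqrt ?_
  have := Finset.sum_le_sum_of_subset_of_nonneg (f := fun p => ‖v p‖ ^ 2)
    (Finset.subset_univ (Finset.univ.image e)) fun _ _ _ => sq_nonneg _
  rwa [Finset.sum_image fun a _ b _ h => he h] at this

lemma cenorm_update_self_zero [DecidableEq ι] (u : ι → ℂ) (p₀ : ι) :
    cenorm (Function.update u p₀ 0) = cenorm fun q : {p // p ≠ p₀} => u q := by
  unfold cenorm
  rw [Fintype.sum_eq_add_sum_subtype_ne _ p₀, Function.update_self, norm_zero,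
    zero_pow two_ne_zero, zero_add]
  exact congrArg _ (Finset.sum_congr rfl fun q _ => by rw [Function.update_of_ne q.2])

lemma cenorm_unitary_mulVec [DecidableEq ι] {U : Matrix ι ι ℂ} (hU : U ∈ unitaryGroup ι ℂ)
    (v : ι → ℂ) : cenorm (U *ᵥ v) = cenorm v := by
  rw [cenorm_eq_norm_toLp, cenorm_eq_norm_toLp, ← toEuclideanCLM_toLp]
  exact (toEuclideanCLM (𝕜 := ℂ) U).norm_map_of_mem_unitary
    (Unitary.map_mem toEuclideanCLM hU) _

lemma cenorm_unitary_conj_mulVec [DecidableEq ι] {Q Z : Matrix ι ι ℂ}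
    (hQ : Q ∈ unitaryGroup ι ℂ) (hZ : Z ∈ unitaryGroup ι ℂ) (L : Matrix ι ι ℂ) (w : ι → ℂ) :
    cenorm ((Qᴴ * L * Z) *ᵥ Zᴴ *ᵥ w) = cenorm (L *ᵥ w) := by
  rw [← mulVec_mulVec, ← mulVec_mulVec, mulVec_mulVec (M := Z), ← star_eq_conjTranspose Z,
    mem_unitaryGroup_iff.mp hZ, one_mulVec]
  exact cenorm_unitary_mulVec (Unitary.star_mem hQ) _

lemma sinAngle_le_cenorm_sub {x xt : ι → ℂ} (hx : cenorm x = 1) (hxt : cenorm xt = 1) (c : ℂ) :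
    sinAngle x xt ≤ cenorm (xt - c • x) := by
  rw [sinAngle, hx, hxt, one_pow, mul_one, div_one, ← Real.sqrt_sq (cenorm_nonneg _)]
  refine Real.sqrt_le_sqrt ?_
  rw [cenorm_eq_norm_toLp] at hx hxt ⊢
  rw [cinner_eq_inner_toLp, WithLp.toLp_sub, WithLp.toLp_smul, norm_sub_sq (𝕜 := ℂ),
    inner_smul_right, norm_smul, hx, hxt]
  set t : ℂ := inner ℂ (WithLp.toLp 2 xt : EuclideanSpace ℂ ι) (WithLp.toLp 2 x)
  -- `1 - |t|² ≤ 1 - 2 Re(c t) + |c|²` is `0 ≤ |c - t̄|²`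
  have key : 0 ≤ Complex.normSq (c - (starRingEnd ℂ) t) := Complex.normSq_nonneg _
  rw [Complex.normSq_sub, Complex.normSq_conj, Complex.conj_conj] at key
  rw [Complex.sq_norm, mul_one, Complex.sq_norm]
  change _ ≤ 1 ^ 2 - 2 * (c * t).re + Complex.normSq c
  linarith

end EuclideanNorm

lemma cenorm_fst_mul_snd {α β : Type*} [Fintype α] [Fintype β] (a : α → ℂ) (b : β → ℂ) :
    cenorm (fun p : α × β => a p.1 * b p.2) = cenorm a * cenorm b := by
  unfold cenorm
  rw [← Real.sqrt_mul (Finset.sum_nonneg fun _ _ => sq_nonneg _), Fintype.sum_prod_type,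
    Fintype.sum_mul_sum]
  simp only [norm_mul, mul_pow]

lemma kron_mulVec {d n : ℕ} (g : Fin d → ℂ) (P : Matrix (Fin n) (Fin n) ℂ) (x : Fin n → ℂ) :
    kron g P *ᵥ x = fun p => g p.1 * (P *ᵥ x) p.2 := by
  ext p
  simp only [kron, mulVec, dotProduct, of_apply, Finset.mul_sum, mul_assoc]

lemma cenorm_kron_mulVec {d n : ℕ} (g : Fin d → ℂ) (P : Matrix (Fin n) (Fin n) ℂ)
    (x : Fin n → ℂ) : cenorm (kron g P *ᵥ x) = cenorm g * cenorm (P *ᵥ x) := by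
  rw [kron_mulVec, cenorm_fst_mul_snd]

lemma mulVec_apply_of_row_block_eq_one {α β R : Type*} [Fintype β] [DecidableEq β]
    [NonAssocSemiring R] {H : Matrix (α × β) β R} {i : α}
    (hH : ∀ k j, H (i, k) j = if k = j then 1 else 0) (y : β → R) (k : β) :
    (H *ᵥ y) (i, k) = y k := by
  simp [mulVec, dotProduct, hH]

section SpectralNorm

variable {k : Type*} [Fintype k] [DecidableEq k]

lemma cenorm_mulVec_le_opNorm (M : Matrix k k ℂ) (z : k → ℂ) :
    cenorm (M *ᵥ z) ≤ opNorm M * cenorm z := by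
  rw [cenorm_eq_norm_toLp, cenorm_eq_norm_toLp, ← toEuclideanCLM_toLp]
  exact (toEuclideanCLM (𝕜 := ℂ) M).le_opNorm _

lemma sigmaMin_nonneg (M : Matrix k k ℂ) : 0 ≤ sigmaMin M :=
  inv_nonneg.mpr (norm_nonneg _)

lemma cenorm_le_div_sigmaMin {M : Matrix k k ℂ} (hM : M.det ≠ 0) (z : k → ℂ) :
    cenorm z ≤ cenorm (M *ᵥ z) / sigmaMin M := by
  rw [sigmaMin, div_inv_eq_mul, mul_comm]
  calc cenorm z = cenorm (M⁻¹ *ᵥ M *ᵥ z) := by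
        rw [mulVec_mulVec, nonsing_inv_mul M (isUnit_iff_ne_zero.mpr hM), one_mulVec]
    _ ≤ opNorm M⁻¹ * cenorm (M *ᵥ z) := cenorm_mulVec_le_opNorm _ _

end SpectralNorm

section Deflation

variable {ι : Type*} [Fintype ι] [DecidableEq ι] {p₀ : ι}

lemma det_toSquareBlockProp_ne_ne_zero {R : Type*} [CommRing R] {T : Matrix ι ι R}
    (hcol : ∀ p, p ≠ p₀ → T p p₀ = 0) (hT : T.det ≠ 0) :
    (T.toSquareBlockProp (· ≠ p₀)).det ≠ 0 := by
  rw [T.twoBlockTriangular_det (· = p₀) fun p hp q hq => hq ▸ hcol p hp] at hT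
  exact right_ne_zero_of_mul hT

lemma toSquareBlockProp_ne_mulVec {R : Type*} [NonUnitalNonAssocSemiring R] {T : Matrix ι ι R}
    (hcol : ∀ p, p ≠ p₀ → T p p₀ = 0) (u : ι → R) (q : {p // p ≠ p₀}) :
    (T.toSquareBlockProp (· ≠ p₀) *ᵥ fun q => u q) q = (T *ᵥ u) q := by
  rw [mulVec, mulVec, dotProduct, dotProduct, Fintype.sum_eq_add_sum_subtype_ne _ p₀,
    hcol q q.2, zero_mul, zero_add]
  rfl

lemma cenorm_toSquareBlockProp_ne_mulVec_le {T : Matrix ι ι ℂ}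
    (hcol : ∀ p, p ≠ p₀ → T p p₀ = 0) (u : ι → ℂ) :
    cenorm (T.toSquareBlockProp (· ≠ p₀) *ᵥ fun q => u q) ≤ cenorm (T *ᵥ u) := by
  rw [show (T.toSquareBlockProp (· ≠ p₀) *ᵥ fun q => u q) = (T *ᵥ u) ∘ Subtype.val from
    funext (toSquareBlockProp_ne_mulVec hcol u)]
  exact cenorm_comp_le Subtype.val_injective _

lemma exists_cenorm_sub_smul_eq {Z : Matrix ι ι ℂ} (hZ : Z ∈ unitaryGroup ι ℂ) {v : ι → ℂ}
    (hcol : ∀ p, Z p p₀ = v p / (cenorm v : ℂ)) (w : ι → ℂ) :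
    ∃ c : ℂ, cenorm (w - c • v) = cenorm fun q : {p // p ≠ p₀} => (Zᴴ *ᵥ w) q := by
  have hZZ : Zᴴ * Z = 1 := mem_unitaryGroup_iff'.mp hZ
  have hv : (cenorm v : ℂ) ≠ 0 := by
    intro h
    have := congr_fun (congr_fun hZZ p₀) p₀
    simp [mul_apply, hcol, h] at this
  have hZv : Zᴴ *ᵥ v = Pi.single p₀ (cenorm v : ℂ) := by
    ext p
    have : (Zᴴ * Z) p p₀ * cenorm v = (Zᴴ *ᵥ v) p := by
      simp only [mul_apply, mulVec, dotProduct, Finset.sum_mul, hcol, mul_assoc,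
        div_mul_cancel₀ _ hv]
    rw [← this, hZZ, one_apply, Pi.single_apply]
    split_ifs <;> simp
  refine ⟨(Zᴴ *ᵥ w) p₀ / cenorm v, ?_⟩
  rw [← cenorm_unitary_mulVec (Unitary.star_mem hZ), ← cenorm_update_self_zero]
  congr 1
  ext p
  rw [star_eq_conjTranspose, mulVec_sub, mulVec_smul, hZv]
  by_cases hp : p = p₀
  · subst hp
    simp [div_mul_cancel₀ _ hv]
  · simp [hp]

lemma sinAngle_le_cenorm_trailing {κ : Type*} [Fintype κ] {x xt : κ → ℂ} (hx : cenorm x = 1)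
    (hxt : cenorm xt = 1) {e : κ → ι} (he : Function.Injective e) {v vt : ι → ℂ}
    (hv : v ∘ e = x) (hvt : vt ∘ e = xt) {Z : Matrix ι ι ℂ} (hZ : Z ∈ unitaryGroup ι ℂ)
    (hcol : ∀ p, Z p p₀ = v p / (cenorm v : ℂ)) :
    sinAngle x xt ≤ cenorm fun q : {p // p ≠ p₀} => (Zᴴ *ᵥ vt) q := by
  obtain ⟨c, hc⟩ := exists_cenorm_sub_smul_eq hZ hcol vt
  calc sinAngle x xt ≤ cenorm (xt - c • x) := sinAngle_le_cenorm_sub hx hxt c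
    _ = cenorm ((vt - c • v) ∘ e) := by rw [← hv, ← hvt]; rfl
    _ ≤ cenorm (vt - c • v) := cenorm_comp_le he _
    _ = _ := hc

end Deflation

theorem stmt16_general {n d : ℕ}
    (P : ℂ → Matrix (Fin n) (Fin n) ℂ)
    (Amat Bmat : Matrix (Fin d × Fin n) (Fin d × Fin n) ℂ)
    (H : ℂ → Matrix (Fin d × Fin n) (Fin n) ℂ)
    (g : ℂ → Fin d → ℂ)
    (i : Fin d)
    (hP2 : ∀ (μ : ℂ) (k j : Fin n), H μ (i, k) j = if k = j then 1 else 0)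
    (lam0 lamt : ℂ)
    (hfact : ∀ μ : ℂ, μ = lam0 ∨ μ = lamt →
      (Amat - μ • Bmat) * H μ = kron (g μ) (P μ) ∧ g μ ≠ 0 ∧
        Function.Injective (H μ).mulVec)
    (x xt : Fin n → ℂ) (hx : cenorm x = 1) (hxt : cenorm xt = 1)
    (hnoteig : (Amat - lamt • Bmat).det ≠ 0)
    (Q Z : Matrix (Fin d × Fin n) (Fin d × Fin n) ℂ)
    (hQ : Q ∈ Matrix.unitaryGroup (Fin d × Fin n) ℂ)
    (hZ : Z ∈ Matrix.unitaryGroup (Fin d × Fin n) ℂ)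
    (p₀ : Fin d × Fin n)
    (hz1 : ∀ p, Z p p₀ = (H lam0).mulVec x p / (cenorm ((H lam0).mulVec x) : ℂ))
    (hA0 : ∀ p, p ≠ p₀ → (Qᴴ * Amat * Z) p p₀ = 0)
    (hB0 : ∀ p, p ≠ p₀ → (Qᴴ * Bmat * Z) p p₀ = 0) :
    sinAngle x xt ≤
      cenorm (g lamt) * cenorm ((P lamt).mulVec xt) /
        sigmaMin (Matrix.of fun p q : {p : Fin d × Fin n // p ≠ p₀} =>
          (Qᴴ * Amat * Z) p.1 q.1 - lamt * (Qᴴ * Bmat * Z) p.1 q.1) := by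
  obtain ⟨hfactt, -, -⟩ := hfact lamt (Or.inr rfl)
  set T := Qᴴ * (Amat - lamt • Bmat) * Z
  have hTA : ∀ p q, T p q = (Qᴴ * Amat * Z) p q - lamt * (Qᴴ * Bmat * Z) p q := by
    simp [T, mul_sub, sub_mul]
  have hcol : ∀ p, p ≠ p₀ → T p p₀ = 0 := fun p hp => by
    rw [hTA, hA0 p hp, hB0 p hp, mul_zero, sub_zero]
  have hTdet : T.det ≠ 0 := by
    rw [det_mul, det_mul]
    exact mul_ne_zero (mul_ne_zero (det_ne_zero_of_left_inverse (mem_unitaryGroup_iff.mp hQ))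
      hnoteig) (det_ne_zero_of_left_inverse (mem_unitaryGroup_iff'.mp hZ))
  have hM : (Matrix.of fun p q : {p : Fin d × Fin n // p ≠ p₀} =>
      (Qᴴ * Amat * Z) p.1 q.1 - lamt * (Qᴴ * Bmat * Z) p.1 q.1) = T.toSquareBlockProp (· ≠ p₀) :=
    Matrix.ext fun p q => (hTA p q).symm
  have hblock : ∀ μ y, (H μ *ᵥ y) ∘ (fun k => (i, k)) = y := fun μ y =>
    funext (mulVec_apply_of_row_block_eq_one (hP2 μ) y)
  set y : {p // p ≠ p₀} → ℂ := fun q => (Zᴴ *ᵥ H lamt *ᵥ xt) q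
  rw [hM]
  calc sinAngle x xt ≤ cenorm y :=
        sinAngle_le_cenorm_trailing hx hxt (fun _ _ h => (Prod.ext_iff.mp h).2) (hblock _ _)
          (hblock _ _) hZ hz1
    _ ≤ cenorm (T.toSquareBlockProp (· ≠ p₀) *ᵥ y) / sigmaMin (T.toSquareBlockProp (· ≠ p₀)) :=
        cenorm_le_div_sigmaMin (det_toSquareBlockProp_ne_ne_zero hcol hTdet) y
    _ ≤ cenorm (T *ᵥ Zᴴ *ᵥ H lamt *ᵥ xt) / sigmaMin (T.toSquareBlockProp (· ≠ p₀)) :=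
        div_le_div_of_nonneg_right (cenorm_toSquareBlockProp_ne_mulVec_le hcol _)
          (sigmaMin_nonneg _)
    _ = _ := by rw [cenorm_unitary_conj_mulVec hQ hZ, mulVec_mulVec, hfactt, cenorm_kron_mulVec]

/-- Eigenvector error bound (Theorem 4.1): for a linearization
`L(λ) = A - λB` of `P` with a right-sided factorization `L(λ)H(λ) = g(λ)⊗P(λ)`
valid at `λ₀` and `λ̃₀` (with `H(λ)` of full column rank and `g(λ) ≠ 0`),
whose `i`-th block of `H` is `I_n`, for unit eigenpairs `(λ₀,x)` exact and
`(λ̃₀,x̃)` approximate, and a generalized Schur form deflating `(λ₀, H(λ₀)x)`,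
one has `sin∠(x,x̃) ≤ ‖g(λ̃₀)‖‖P(λ̃₀)x̃‖ / sep(λ̃₀,(A₁,B₁))`. -/
theorem stmt16 {n d : ℕ}
    (P : ℂ → Matrix (Fin n) (Fin n) ℂ)
    (Amat Bmat : Matrix (Fin d × Fin n) (Fin d × Fin n) ℂ)
    (H : ℂ → Matrix (Fin d × Fin n) (Fin n) ℂ)
    (g : ℂ → Fin d → ℂ)
    (i : Fin d)
    (hP2 : ∀ (μ : ℂ) (k j : Fin n), H μ (i, k) j = if k = j then 1 else 0)
    (lam0 lamt : ℂ)
    (hfact : ∀ μ : ℂ, μ = lam0 ∨ μ = lamt →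
      (Amat - μ • Bmat) * H μ = kron (g μ) (P μ) ∧ g μ ≠ 0 ∧
        Function.Injective (H μ).mulVec)
    (x xt : Fin n → ℂ) (hx : cenorm x = 1) (hxt : cenorm xt = 1)
    (heig : (P lam0).mulVec x = 0)
    (hnoteig : (Amat - lamt • Bmat).det ≠ 0)
    (Q Z : Matrix (Fin d × Fin n) (Fin d × Fin n) ℂ)
    (hQ : Q ∈ Matrix.unitaryGroup (Fin d × Fin n) ℂ)
    (hZ : Z ∈ Matrix.unitaryGroup (Fin d × Fin n) ℂ)
    (p₀ : Fin d × Fin n)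
    (hz1 : ∀ p, Z p p₀ = (H lam0).mulVec x p / (cenorm ((H lam0).mulVec x) : ℂ))
    (hA0 : ∀ p, p ≠ p₀ → (Qᴴ * Amat * Z) p p₀ = 0)
    (hB0 : ∀ p, p ≠ p₀ → (Qᴴ * Bmat * Z) p p₀ = 0) :
    sinAngle x xt ≤
      cenorm (g lamt) * cenorm ((P lamt).mulVec xt) /
        sigmaMin (Matrix.of fun p q : {p : Fin d × Fin n // p ≠ p₀} =>
          (Qᴴ * Amat * Z) p.1 q.1 - lamt * (Qᴴ * Bmat * Z) p.1 q.1) :=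
  stmt16_general P Amat Bmat H g i hP2 lam0 lamt hfact x xt hx hxt hnoteig Q Z hQ hZ p₀ hz1 hA0 hB0
end

section
/- Let P(λ) = Σ_{i=0}^d λ^i A_i with d = ε + η + 1, and let M(λ) be an (η+1)n×(ε+1)n pencil. Then (Λ_η(λ)ᵀ ⊗ I_n) M(λ) (Λ_ε(λ) ⊗ I_n) = P(λ) for all λ if and only if, writing M(λ) = λM₁ + M₀ as an (η+1)×(ε+1) block pencil with n×n blocks, the anti-diagonal sum conditions Σ_{i+j=d+2−k} [M₁]_{ij} + Σ_{i+j=d+1−k} [M₀]_{ij} = A_k hold for k = 0, 1, …, d. -/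
open scoped BigOperators

/-- Coefficient extraction from an equality of polynomial functions on `ℂ`. -/
lemma coeff_eq_of_eval {N : ℕ} (c d : ℕ → ℂ)
    (h : ∀ μ : ℂ, ∑ k ∈ Finset.range N, μ ^ k * c k = ∑ k ∈ Finset.range N, μ ^ k * d k) :
    ∀ k < N, c k = d k := by
  have hpq : (∑ k ∈ Finset.range N, Polynomial.C (c k) * Polynomial.X ^ k)
      = ∑ k ∈ Finset.range N, Polynomial.C (d k) * Polynomial.X ^ k := by
    apply Polynomial.funext
    intro μ
    have := h μ
    simp only [Polynomial.eval_finset_sum, Polynomial.eval_mul, Polynomial.eval_C,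
      Polynomial.eval_pow, Polynomial.eval_X]
    calc ∑ k ∈ Finset.range N, c k * μ ^ k = ∑ k ∈ Finset.range N, μ ^ k * c k := by
          simp [mul_comm]
      _ = ∑ k ∈ Finset.range N, μ ^ k * d k := this
      _ = ∑ k ∈ Finset.range N, d k * μ ^ k := by simp [mul_comm]
  intro k hk
  have := congrArg (Polynomial.coeff · k) hpq
  simpa [Polynomial.finset_sum_coeff, Polynomial.coeff_C_mul, Polynomial.coeff_X_pow,
    Finset.sum_ite_eq' (Finset.range N), Finset.mem_range, hk] using this

/-- Entrywise expansion of the triple product. -/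
lemma keyA {n eps eta : ℕ}
    (M0 M1 : Fin (eta + 1) → Fin (eps + 1) → Matrix (Fin n) (Fin n) ℂ)
    (μ : ℂ) (i j : Fin n) :
    (LamTI eta n μ *
      (Matrix.of fun (p : Fin (eta + 1) × Fin n) (q : Fin (eps + 1) × Fin n) =>
        M0 p.1 q.1 p.2 q.2 + μ * M1 p.1 q.1 p.2 q.2) *
      LamI eps n μ) i j
    = ∑ a : Fin (eta + 1), ∑ b : Fin (eps + 1),
        (μ ^ (eta - (a:ℕ) + (eps - (b:ℕ))) * M0 a b i j
          + μ ^ (eta - (a:ℕ) + (eps - (b:ℕ)) + 1) * M1 a b i j) := by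
  simp only [Matrix.mul_apply, LamTI, LamI, Matrix.of_apply, Fintype.sum_prod_type,
    mul_ite, ite_mul, mul_one, one_mul, mul_zero, zero_mul, Finset.sum_ite_eq,
    Finset.sum_ite_eq', Finset.mem_univ, if_true]
  rw [Finset.sum_comm]
  refine Finset.sum_congr rfl fun b _ => ?_
  rw [Finset.sum_mul]
  refine Finset.sum_congr rfl fun a _ => ?_
  rw [pow_add, pow_add]
  ring

/-- Rearranging the double sum by powers of `μ`. -/
lemma keyB {eps eta : ℕ} (P0 P1 : Fin (eta + 1) → Fin (eps + 1) → ℂ) (μ : ℂ) :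
    (∑ a : Fin (eta + 1), ∑ b : Fin (eps + 1),
        (μ ^ (eta - (a:ℕ) + (eps - (b:ℕ))) * P0 a b
          + μ ^ (eta - (a:ℕ) + (eps - (b:ℕ)) + 1) * P1 a b))
    = ∑ k ∈ Finset.range (eps + eta + 2), μ ^ k *
        ((∑ p : Fin (eta + 1) × Fin (eps + 1),
            if (p.1 : ℕ) + (p.2 : ℕ) + k = eps + eta + 1 then P1 p.1 p.2 else 0) +
         (∑ p : Fin (eta + 1) × Fin (eps + 1),
            if (p.1 : ℕ) + (p.2 : ℕ) + k + 1 = eps + eta + 1 then P0 p.1 p.2 else 0)) := by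
  symm
  calc
    ∑ k ∈ Finset.range (eps + eta + 2), μ ^ k *
        ((∑ p : Fin (eta + 1) × Fin (eps + 1),
            if (p.1 : ℕ) + (p.2 : ℕ) + k = eps + eta + 1 then P1 p.1 p.2 else 0) +
         (∑ p : Fin (eta + 1) × Fin (eps + 1),
            if (p.1 : ℕ) + (p.2 : ℕ) + k + 1 = eps + eta + 1 then P0 p.1 p.2 else 0))
      = ∑ k ∈ Finset.range (eps + eta + 2), ∑ p : Fin (eta + 1) × Fin (eps + 1),
          (μ ^ k * ((if (p.1 : ℕ) + (p.2 : ℕ) + k = eps + eta + 1 then P1 p.1 p.2 else 0) +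
            (if (p.1 : ℕ) + (p.2 : ℕ) + k + 1 = eps + eta + 1 then P0 p.1 p.2 else 0))) := by
        refine Finset.sum_congr rfl fun k _ => ?_
        rw [← Finset.sum_add_distrib, Finset.mul_sum]
    _ = ∑ p : Fin (eta + 1) × Fin (eps + 1), ∑ k ∈ Finset.range (eps + eta + 2),
          (μ ^ k * ((if (p.1 : ℕ) + (p.2 : ℕ) + k = eps + eta + 1 then P1 p.1 p.2 else 0) +
            (if (p.1 : ℕ) + (p.2 : ℕ) + k + 1 = eps + eta + 1 then P0 p.1 p.2 else 0))) :=
        Finset.sum_comm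
    _ = ∑ a : Fin (eta + 1), ∑ b : Fin (eps + 1),
        (μ ^ (eta - (a:ℕ) + (eps - (b:ℕ))) * P0 a b
          + μ ^ (eta - (a:ℕ) + (eps - (b:ℕ)) + 1) * P1 a b) := by
        rw [Fintype.sum_prod_type]
        refine Finset.sum_congr rfl fun a _ => Finset.sum_congr rfl fun b _ => ?_
        have ha : (a : ℕ) ≤ eta := Nat.lt_succ_iff.mp a.isLt
        have hb : (b : ℕ) ≤ eps := Nat.lt_succ_iff.mp b.isLt
        have h1 : ∀ k : ℕ, ((a:ℕ) + (b:ℕ) + k = eps + eta + 1) ↔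
            k = eta - (a:ℕ) + (eps - (b:ℕ)) + 1 := by omega
        have h0 : ∀ k : ℕ, ((a:ℕ) + (b:ℕ) + k + 1 = eps + eta + 1) ↔
            k = eta - (a:ℕ) + (eps - (b:ℕ)) := by omega
        simp only [h1, h0, mul_add, mul_ite, mul_zero, Finset.sum_add_distrib]
        rw [Finset.sum_ite_eq' (Finset.range (eps + eta + 2)),
          Finset.sum_ite_eq' (Finset.range (eps + eta + 2))]
        have m1 : eta - (a:ℕ) + (eps - (b:ℕ)) + 1 ∈ Finset.range (eps + eta + 2) := by
          simp only [Finset.mem_range]; omega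
        have m0 : eta - (a:ℕ) + (eps - (b:ℕ)) ∈ Finset.range (eps + eta + 2) := by
          simp only [Finset.mem_range]; omega
        rw [if_pos m1, if_pos m0]
        ring

/-- A pencil `M(λ) = λM₁ + M₀`, viewed as an `(η+1)×(ε+1)` block pencil with
`n×n` blocks, satisfies `(Λ_η(λ)ᵀ⊗I) M(λ) (Λ_ε(λ)⊗I) = Σ_{k=0}^d λ^k A_k`
(`d = ε+η+1`) if and only if the anti-diagonal sum conditions
`Σ_{i+j=d+2−k}[M₁]_{ij} + Σ_{i+j=d+1−k}[M₀]_{ij} = A_k` hold for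
`k = 0,…,d` (blocks `1`-indexed; below they are `0`-indexed, so the
conditions read `i+j+k = d` and `i+j+k+1 = d`). -/
theorem stmt19 {n eps eta : ℕ} (A : ℕ → Matrix (Fin n) (Fin n) ℂ)
    (M0 M1 : Fin (eta + 1) → Fin (eps + 1) → Matrix (Fin n) (Fin n) ℂ) :
    (∀ μ : ℂ,
        LamTI eta n μ *
          (Matrix.of fun (p : Fin (eta + 1) × Fin n) (q : Fin (eps + 1) × Fin n) =>
            M0 p.1 q.1 p.2 q.2 + μ * M1 p.1 q.1 p.2 q.2) *
          LamI eps n μ =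
        ∑ i ∈ Finset.range (eps + eta + 2), μ ^ i • A i) ↔
    ∀ k : ℕ, k ≤ eps + eta + 1 →
      (∑ p : Fin (eta + 1) × Fin (eps + 1),
          if (p.1 : ℕ) + (p.2 : ℕ) + k = eps + eta + 1 then M1 p.1 p.2 else 0) +
      (∑ p : Fin (eta + 1) × Fin (eps + 1),
          if (p.1 : ℕ) + (p.2 : ℕ) + k + 1 = eps + eta + 1 then M0 p.1 p.2 else 0) =
      A k := by
  constructor
  · intro h k hk
    ext i j
    have hμ : ∀ μ : ℂ,
        ∑ m ∈ Finset.range (eps + eta + 2), μ ^ m *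
          ((∑ p : Fin (eta + 1) × Fin (eps + 1),
              if (p.1 : ℕ) + (p.2 : ℕ) + m = eps + eta + 1 then M1 p.1 p.2 i j else 0) +
           (∑ p : Fin (eta + 1) × Fin (eps + 1),
              if (p.1 : ℕ) + (p.2 : ℕ) + m + 1 = eps + eta + 1 then M0 p.1 p.2 i j else 0))
        = ∑ m ∈ Finset.range (eps + eta + 2), μ ^ m * A m i j := by
      intro μ
      have := congrFun (congrFun (h μ) i) j
      rw [keyA, keyB (fun a b => M0 a b i j) (fun a b => M1 a b i j)] at this
      simpa [Matrix.sum_apply, Matrix.smul_apply, smul_eq_mul] using this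
    have := coeff_eq_of_eval _ _ hμ k (by omega)
    simpa [Matrix.add_apply, Matrix.sum_apply, apply_ite (fun M : Matrix (Fin n) (Fin n) ℂ => M i j)]
      using this
  · intro h μ
    ext i j
    rw [keyA, keyB (fun a b => M0 a b i j) (fun a b => M1 a b i j)]
    simp only [Matrix.sum_apply, Matrix.smul_apply, smul_eq_mul]
    refine Finset.sum_congr rfl fun k hkmem => ?_
    have hk : k ≤ eps + eta + 1 := by
      have := Finset.mem_range.mp hkmem; omega
    have := congrFun (congrFun (h k hk) i) j
    simp only [Matrix.add_apply, Matrix.sum_apply,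
      apply_ite (fun M : Matrix (Fin n) (Fin n) ℂ => M i j), Matrix.zero_apply] at this
    rw [← this]
end
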